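/- arXiv:1911.08770 — 8 statements merged into one kernel-verified Lean document; each statement's English description precedes it below -/
import Mathlib

section
/- Every Schreier split epimorphism of monoids is a strongly split epimorphism: if k : K → X is the kernel and s : Y → X the section, then every x ∈ X lies in the submonoid of X generated by the images of k and s; more strongly, the pair (k, s) is jointly extremal-epimorphic, i.e., any submonoid of X containing the images of k and s equals X. -/
/-- Every Schreier split epimorphism of monoids is strongly split:
every element lies in the submonoid generated by the images of the kernel and
the section, and in fact the pair (kernel, section) is jointly
extremal-epimorphic. -/
theorem schreier_is_strongly_split {X Y : Type*} [Monoid X] [Monoid Y]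
    (f : X →* Y) (s : Y →* X) (hfs : ∀ y, f (s y) = y)
    (q : X → {w : X // f w = 1})
    (hS1 : ∀ x : X, x = (q x : X) * s (f x))
    (hS2 : ∀ (a : {w : X // f w = 1}) (y : Y), q ((a : X) * s y) = a) :
    (∀ x : X, x ∈ Submonoid.closure ({x : X | f x = 1} ∪ Set.range s)) ∧
    (∀ S : Submonoid X, {x : X | f x = 1} ⊆ (S : Set X) →
      Set.range s ⊆ (S : Set X) → S = ⊤) := by
  constructor
  · intro x
    rw [hS1 x]
    exact mul_mem (Submonoid.subset_closure (Or.inl (q x).2))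
      (Submonoid.subset_closure (Or.inr ⟨f x, rfl⟩))
  · intro S hk hs
    rw [eq_top_iff]
    intro x _
    rw [hS1 x]
    exact mul_mem (hk (q x).2) (hs ⟨f x, rfl⟩)
end

section
/- Schreier split epimorphisms of monoids are stable under pullback: if (f : X → Y, s : Y → X) is a Schreier split epimorphism and g : Z → Y is any monoid homomorphism, then the pullback projection π_Z : Z ×_Y X → Z with section ⟨id_Z, s∘g⟩ : Z → Z ×_Y X is a Schreier split epimorphism. -/
/-- The pullback of monoid homomorphisms `g : Z →* Y` and `f : X →* Y`,
as a submonoid of `Z × X`. -/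
def pullbackSubmonoid {Z X Y : Type*} [Monoid Z] [Monoid X] [Monoid Y]
    (g : Z →* Y) (f : X →* Y) : Submonoid (Z × X) where
  carrier := {p | g p.1 = f p.2}
  one_mem' := by simp
  mul_mem' := by
    intro p q hp hq
    simp only [Set.mem_setOf_eq, Prod.fst_mul, Prod.snd_mul, map_mul] at *
    rw [hp, hq]

/-- Schreier split epimorphisms of monoids are stable under
pullback: the projection `π_Z : Z ×_Y X → Z` with section `⟨id_Z, s∘g⟩` is
again a Schreier split epimorphism. -/
theorem schreier_stable_under_pullback {X Y Z : Type*}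
    [Monoid X] [Monoid Y] [Monoid Z]
    (f : X →* Y) (s : Y →* X) (hfs : ∀ y, f (s y) = y) (g : Z →* Y)
    (hSchreier : ∀ x : X, ∃! a : {w : X // f w = 1}, x = (a : X) * s (f x)) :
    ∀ p : pullbackSubmonoid g f, ∃! a : pullbackSubmonoid g f,
      (a : Z × X).1 = 1 ∧
      p = a * ⟨((p : Z × X).1, s (g (p : Z × X).1)), (hfs (g (p : Z × X).1)).symm⟩ := by
  rintro ⟨⟨z, x⟩, hp⟩
  have hp' : g z = f x := hp
  obtain ⟨⟨a, ha1⟩, hax, huniq⟩ := hSchreier x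
  simp only at hax
  refine ⟨⟨(1, a), by simp [pullbackSubmonoid, ha1]⟩, ⟨rfl, ?_⟩, ?_⟩
  · ext
    · simp
    · simpa [hp'] using hax
  · rintro ⟨⟨b1, b2⟩, hb⟩ ⟨hb1, heq⟩
    have hb1' : b1 = 1 := hb1
    have hb' : g b1 = f b2 := hb
    have hfb2 : f b2 = 1 := by rw [← hb', hb1', map_one]
    have heqv : ((z, x) : Z × X) = ((b1, b2) : Z × X) * (z, s (g z)) := congrArg Subtype.val heq
    have heq' : x = b2 * s (g z) := congrArg Prod.snd heqv
    have := huniq ⟨b2, hfb2⟩ (by simpa [hp'] using heq')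
    have hb2 : b2 = a := congrArg Subtype.val this
    ext <;> simp [hb1', hb2]
end

section
/- Any morphism between two Schreier split extensions of monoids is compatible with the Schreier retractions: given Schreier split extensions (k, f, s, q) and (k', f', s', q') and monoid homomorphisms g̃ : K → K', g : X → X', h : Y → Y' with g∘k = k'∘g̃, f'∘g = h∘f, and g∘s = s'∘h, one has g̃∘q = q'∘g. -/
/-- Any morphism between two Schreier split extensions of monoids
is compatible with the Schreier retractions: `g̃ ∘ q = q' ∘ g`. -/
theorem schreier_morphism_compatible {X Y X' Y' : Type*}
    [Monoid X] [Monoid Y] [Monoid X'] [Monoid Y']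
    (f : X →* Y) (s : Y →* X) (hfs : ∀ y, f (s y) = y)
    (f' : X' →* Y') (s' : Y' →* X') (hfs' : ∀ y, f' (s' y) = y)
    (q : X → MonoidHom.mker f)
    (hS1 : ∀ x : X, x = (q x : X) * s (f x))
    (hS2 : ∀ (a : MonoidHom.mker f) (y : Y), q ((a : X) * s y) = a)
    (q' : X' → MonoidHom.mker f')
    (hS1' : ∀ x : X', x = (q' x : X') * s' (f' x))
    (hS2' : ∀ (a : MonoidHom.mker f') (y : Y'), q' ((a : X') * s' y) = a)
    (g : X →* X') (h : Y →* Y')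
    (gt : MonoidHom.mker f →* MonoidHom.mker f')
    (hker : ∀ a : MonoidHom.mker f, (gt a : X') = g (a : X))
    (hsq1 : ∀ x : X, f' (g x) = h (f x))
    (hsq2 : ∀ y : Y, g (s y) = s' (h y)) :
    ∀ x : X, gt (q x) = q' (g x) := by
  intro x
  have : g x = (gt (q x) : X') * s' (h (f x)) := by
    conv_lhs => rw [hS1 x]
    rw [map_mul, hker, hsq2]
  rw [this, hS2']
end

section
/- In the category of monoids, any natural imaginary splitting of the comparison map from sum to product is either the direct or the twisted one: if t assigns to each pair of monoids (A, B) a monoid homomorphism t_{A,B} : F(A × B) → A + B from the free monoid on the underlying set of A × B to the coproduct, natural in A and B, such that the canonical map r_{A,B} : A + B → A × B satisfies r_{A,B} ∘ t_{A,B} = ε_{A×B} (the counit evaluating words), then either t_{A,B}([(a,b)]) = ι_A(a)·ι_B(b) for all monoids A, B and all (a,b) ∈ A × B, or t_{A,B}([(a,b)]) = ι_B(b)·ι_A(a) for all monoids A, B and all (a,b) ∈ A × B. -/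
noncomputable def eHom : Monoid.Coprod (FreeMonoid Unit) (FreeMonoid Unit) →* FreeMonoid Bool :=
  Monoid.Coprod.lift (FreeMonoid.lift fun _ => FreeMonoid.of false)
    (FreeMonoid.lift fun _ => FreeMonoid.of true)

noncomputable def gHom : FreeMonoid Bool →* Monoid.Coprod (FreeMonoid Unit) (FreeMonoid Unit) :=
  FreeMonoid.lift fun b => if b then Monoid.Coprod.inr (FreeMonoid.of ())
    else Monoid.Coprod.inl (FreeMonoid.of ())

lemma g_comp_e : gHom.comp eHom = MonoidHom.id _ := by
  apply Monoid.Coprod.hom_ext <;>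
  · apply FreeMonoid.hom_eq
    intro x
    simp [eHom, gHom]

lemma count_sum (l : List Bool) : l.count false + l.count true = l.length := by
  induction l with
  | nil => simp
  | cons a l ih => cases a <;> simp [List.count_cons] <;> omega

lemma count_lemma (l : List Bool) (h0 : l.count false = 1) (h1 : l.count true = 1) :
    l = [false, true] ∨ l = [true, false] := by
  have hlen : l.length = 2 := by have := count_sum l; omega
  match l, hlen with
  | [a, b], _ => cases a <;> cases b <;> simp_all

noncomputable def fHom (c : Bool) : FreeMonoid Bool →* FreeMonoid Unit :=
  FreeMonoid.lift fun b => if b = c then FreeMonoid.of () else 1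

lemma fHom_length (c : Bool) (x : FreeMonoid Bool) :
    (fHom c x).length = x.toList.count c := by
  induction x with
  | one => simp [fHom]
  | of b => by_cases h : b = c <;> simp [fHom, h, FreeMonoid.toList_of, List.count_singleton]
  | mul x y ihx ihy =>
      rw [map_mul, FreeMonoid.length_mul, FreeMonoid.toList_mul, List.count_append, ihx, ihy]

lemma fHom_false_comp : (fHom false).comp eHom =
    (MonoidHom.fst _ _).comp (Monoid.Coprod.lift
      (MonoidHom.inl (FreeMonoid Unit) (FreeMonoid Unit)) (MonoidHom.inr _ _)) := by
  apply Monoid.Coprod.hom_ext <;>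
  · apply FreeMonoid.hom_eq
    intro x
    simp [eHom, fHom]

lemma fHom_true_comp : (fHom true).comp eHom =
    (MonoidHom.snd _ _).comp (Monoid.Coprod.lift
      (MonoidHom.inl (FreeMonoid Unit) (FreeMonoid Unit)) (MonoidHom.inr _ _)) := by
  apply Monoid.Coprod.hom_ext <;>
  · apply FreeMonoid.hom_eq
    intro x
    simp [eHom, fHom]

theorem natural_imaginary_splitting_dire_or_twisted_aux : True := trivial

/-- In the category of monoids, any natural imaginary splitting
of the comparison map from the coproduct to the product is either the direct
or the twisted one. -/
theorem natural_imaginary_splitting_direct_or_twisted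
    (t : ∀ (A B : Type) [Monoid A] [Monoid B],
      FreeMonoid (A × B) →* Monoid.Coprod A B)
    (hnat : ∀ (A B C D : Type) [Monoid A] [Monoid B] [Monoid C] [Monoid D]
      (u : A →* C) (v : B →* D),
      (Monoid.Coprod.map u v).comp (t A B) =
        (t C D).comp (FreeMonoid.map (Prod.map u v)))
    (hsplit : ∀ (A B : Type) [Monoid A] [Monoid B],
      (Monoid.Coprod.lift (MonoidHom.inl A B) (MonoidHom.inr A B)).comp (t A B) =
        FreeMonoid.lift (id : A × B → A × B)) :
    (∀ (A B : Type) [Monoid A] [Monoid B] (a : A) (b : B),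
      t A B (FreeMonoid.of (a, b)) = Monoid.Coprod.inl a * Monoid.Coprod.inr b) ∨
    (∀ (A B : Type) [Monoid A] [Monoid B] (a : A) (b : B),
      t A B (FreeMonoid.of (a, b)) = Monoid.Coprod.inr b * Monoid.Coprod.inl a) := by
  set M := FreeMonoid Unit with hM
  set w := t M M (FreeMonoid.of (FreeMonoid.of (), FreeMonoid.of ())) with hw
  have hr : Monoid.Coprod.lift (MonoidHom.inl M M) (MonoidHom.inr M M) w
      = (FreeMonoid.of (), FreeMonoid.of ()) := by
    have := DFunLike.congr_fun (hsplit M M)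
      (FreeMonoid.of (FreeMonoid.of (), FreeMonoid.of ()))
    simpa using this
  have hcf : (eHom w).toList.count false = 1 := by
    have h1 : fHom false (eHom w) = FreeMonoid.of () := by
      have := DFunLike.congr_fun fHom_false_comp w
      simp only [MonoidHom.comp_apply] at this
      rw [this, hr]
      rfl
    have := fHom_length false (eHom w)
    rw [h1] at this
    simpa using this.symm
  have hct : (eHom w).toList.count true = 1 := by
    have h1 : fHom true (eHom w) = FreeMonoid.of () := by
      have := DFunLike.congr_fun fHom_true_comp w
      simp only [MonoidHom.comp_apply] at this
      rw [this, hr]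
      rfl
    have := fHom_length true (eHom w)
    rw [h1] at this
    simpa using this.symm
  have hgw : w = gHom (eHom w) := (DFunLike.congr_fun g_comp_e w).symm
  have key : ∀ (A B : Type) [Monoid A] [Monoid B] (a : A) (b : B),
      t A B (FreeMonoid.of (a, b)) =
        Monoid.Coprod.map (FreeMonoid.lift fun _ : Unit => a)
          (FreeMonoid.lift fun _ : Unit => b) w := by
    intro A B _ _ a b
    have hn := DFunLike.congr_fun
      (hnat M M A B (FreeMonoid.lift fun _ => a) (FreeMonoid.lift fun _ => b))
      (FreeMonoid.of (FreeMonoid.of (), FreeMonoid.of ()))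
    simp only [MonoidHom.comp_apply, FreeMonoid.map_of, Prod.map_apply] at hn
    rw [← hw] at hn
    exact hn.symm
  rcases count_lemma (eHom w).toList hcf hct with h | h
  · left
    intro A B _ _ a b
    have hew : eHom w = FreeMonoid.of false * FreeMonoid.of true := by
      rw [← FreeMonoid.ofList_toList (eHom w), h]
      rfl
    have hwval : w = Monoid.Coprod.inl (FreeMonoid.of ()) * Monoid.Coprod.inr (FreeMonoid.of ()) := by
      rw [hgw, hew]
      simp [gHom]
    rw [key A B a b, hwval]
    simp [Monoid.Coprod.map_apply_inl, Monoid.Coprod.map_apply_inr]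
  · right
    intro A B _ _ a b
    have hew : eHom w = FreeMonoid.of true * FreeMonoid.of false := by
      rw [← FreeMonoid.ofList_toList (eHom w), h]
      rfl
    have hwval : w = Monoid.Coprod.inr (FreeMonoid.of ()) * Monoid.Coprod.inl (FreeMonoid.of ()) := by
      rw [hgw, hew]
      simp [gHom]
    rw [key A B a b, hwval]
    simp [Monoid.Coprod.map_apply_inl, Monoid.Coprod.map_apply_inr]
end

section
/- In the category of groups, the assignment sending a generator (a,b) ∈ A × B of the free group on A × B to ι_A(a)⁻¹·ι_B(b)·ι_A(a)² in the free product A ∗ B defines a natural imaginary splitting of the comparison map r_{A,B} : A ∗ B → A × B, i.e., it is natural in A and B and satisfies r_{A,B} ∘ t_{A,B} = ε_{A×B}, and it is distinct from both the direct splitting (a,b) ↦ ι_A(a)·ι_B(b) and the twisted splitting (a,b) ↦ ι_B(b)·ι_A(a). -/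
/-- The imaginary splitting of groups sending a generator `(a, b)` to
`ι_A(a)⁻¹ · ι_B(b) · ι_A(a)²` in the free product `A ∗ B`. -/
noncomputable def groupImaginarySplitting (A B : Type) [Group A] [Group B] :
    FreeGroup (A × B) →* Monoid.Coprod A B :=
  FreeGroup.lift fun p =>
    (Monoid.Coprod.inl p.1)⁻¹ * Monoid.Coprod.inr p.2 * (Monoid.Coprod.inl p.1) ^ 2

open Monoid in
noncomputable def groupImaginarySplittingDetect :
    Monoid.Coprod (FreeGroup Unit) (FreeGroup Unit) →* FreeGroup Bool :=
  Coprod.lift (FreeGroup.lift fun _ => FreeGroup.of true)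
    (FreeGroup.lift fun _ => FreeGroup.of false)

/-- In the category of groups, `(a,b) ↦ ι_A(a)⁻¹·ι_B(b)·ι_A(a)²`
defines a natural imaginary splitting of the comparison map `A ∗ B → A × B`
which is neither the direct nor the twisted splitting. -/
theorem groupImaginarySplitting_natural_splitting_and_nondirect :
    (∀ (A B C D : Type) [Group A] [Group B] [Group C] [Group D]
      (u : A →* C) (v : B →* D),
      (Monoid.Coprod.map u v).comp (groupImaginarySplitting A B) =
        (groupImaginarySplitting C D).comp (FreeGroup.map (Prod.map u v))) ∧
    (∀ (A B : Type) [Group A] [Group B],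
      (Monoid.Coprod.lift (MonoidHom.inl A B) (MonoidHom.inr A B)).comp
          (groupImaginarySplitting A B) =
        FreeGroup.lift (id : A × B → A × B)) ∧
    (groupImaginarySplitting (FreeGroup Unit) (FreeGroup Unit)
        (FreeGroup.of (FreeGroup.of (), FreeGroup.of ())) ≠
      Monoid.Coprod.inl (FreeGroup.of ()) * Monoid.Coprod.inr (FreeGroup.of ())) ∧
    (groupImaginarySplitting (FreeGroup Unit) (FreeGroup Unit)
        (FreeGroup.of (FreeGroup.of (), FreeGroup.of ())) ≠
      Monoid.Coprod.inr (FreeGroup.of ()) * Monoid.Coprod.inl (FreeGroup.of ())) := by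
  refine ⟨?_, ?_, ?_, ?_⟩
  · intro A B C D _ _ _ _ u v
    apply FreeGroup.ext_hom
    intro a
    simp [groupImaginarySplitting, mul_assoc]
  · intro A B _ _
    apply FreeGroup.ext_hom
    intro a
    ext <;> simp [groupImaginarySplitting, pow_two]
  · intro h
    have := congrArg groupImaginarySplittingDetect h
    revert this
    simp [groupImaginarySplitting, groupImaginarySplittingDetect]
    decide
  · intro h
    have := congrArg groupImaginarySplittingDetect h
    revert this
    simp [groupImaginarySplitting, groupImaginarySplittingDetect]
    decide
end

section
/- An algebra X in a Jónsson–Tarski variety is Schreier-special (i.e., the split epimorphism π₂ : X × X → X with section the diagonal ⟨id, id⟩ and kernel ⟨id, 0⟩ : X → X × X is a Schreier split epimorphism) if and only if X carries a right loop structure, i.e., there exists a binary operation − on X such that (x − y) + y = x and (x + y) − y = x for all x, y ∈ X. -/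
/-- An algebra `X` in a Jónsson–Tarski variety is
Schreier-special iff it carries a right loop structure. -/
theorem schreier_special_iff_right_loop {X : Type*}
    (add : X → X → X) (zero : X)
    (hr : ∀ x, add x zero = x) (hl : ∀ x, add zero x = x) :
    (∃ q : X × X → X,
      (∀ p : X × X, p = ((add (q p) p.2, add zero p.2) : X × X)) ∧
      (∀ a y : X, q ((add a y, add zero y) : X × X) = a)) ↔
    (∃ sub : X → X → X,
      (∀ x y : X, add (sub x y) y = x) ∧ (∀ x y : X, sub (add x y) y = x)) := by
  constructor
  · rintro ⟨q, h1, h2⟩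
    refine ⟨fun x y => q (x, y), fun x y => ?_, fun x y => ?_⟩
    · have := h1 (x, y)
      have := congrArg Prod.fst this
      simpa using this.symm
    · have := h2 x y
      rwa [hl] at this
  · rintro ⟨sub, h1, h2⟩
    refine ⟨fun p => sub p.1 p.2, fun p => ?_, fun a y => ?_⟩
    · simp [h1, hl]
    · simp [hl, h2]
end

section
/- An algebra X in a Jónsson–Tarski variety is special with respect to left homogeneous split epimorphisms (i.e., π₂ : X × X → X with diagonal section and kernel ⟨id,0⟩ is left homogeneous) if and only if X carries a left loop structure: there exists a binary operation ⊘ (written x ⊘ y, thought of as −x + y) such that x + ((−x) + y) = y and (−x) + (x + y) = y for all x, y, where −x + y abbreviates ⊘(x, y). -/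
/-- An algebra `X` in a Jónsson–Tarski variety is special with
respect to left homogeneous split epimorphisms iff it carries a left loop
structure. -/
theorem left_homogeneous_special_iff_left_loop {X : Type*}
    (add : X → X → X) (zero : X)
    (hr : ∀ x, add x zero = x) (hl : ∀ x, add zero x = x) :
    (∀ p : X × X, ∃! b : X, p = ((add p.2 b, add p.2 zero) : X × X)) ↔
    (∃ lsub : X → X → X,
      (∀ x y : X, add x (lsub x y) = y) ∧ (∀ x y : X, lsub x (add x y) = y)) := by
  constructor
  · intro h
    refine ⟨fun x y => (h (y, x)).exists.choose, ?_, ?_⟩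
    · intro x y
      have := (h (y, x)).exists.choose_spec
      have h1 := congrArg Prod.fst this
      simp only at h1
      simpa using h1.symm
    · intro x y
      have hu := h (add x y, x)
      have h1 := hu.unique hu.exists.choose_spec
        (by simp [hr] : ((add x y, x) : X × X) = (add x y, add x zero))
      exact h1
  · rintro ⟨lsub, h1, h2⟩
    intro p
    refine ⟨lsub p.2 p.1, by simp [h1, hr], ?_⟩
    intro b hb
    have := congrArg Prod.fst hb
    simp at this
    rw [this, h2]
end

section
/- If every split epimorphism of monoids over a monoid Y (with section) is a Schreier split epimorphism, then Y is a group. -/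
/-- If every split epimorphism of monoids over a monoid `Y`
(with a chosen section) is a Schreier split epimorphism, then `Y` is a group
(every element is invertible). -/
theorem all_points_schreier_implies_group {Y : Type} [Monoid Y]
    (h : ∀ (X : Type) [Monoid X] (f : X →* Y) (s : Y →* X),
      (∀ y, f (s y) = y) →
      ∀ x : X, ∃! a : {w : X // f w = 1}, x = (a : X) * s (f x)) :
    ∀ y : Y, IsUnit y := by
  have key : ∀ y : Y, ∃ c : Y, c * y = 1 := by
    intro y
    have hs : ∀ z : Y, (MonoidHom.fst Y Y) (((MonoidHom.id Y).prod (MonoidHom.id Y)) z) = z :=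
      fun z => rfl
    obtain ⟨⟨⟨a₁, a₂⟩, ha⟩, hdec, _⟩ :=
      h (Y × Y) (MonoidHom.fst Y Y) ((MonoidHom.id Y).prod (MonoidHom.id Y)) hs (y, 1)
    -- hdec : (y, 1) = (a₁, a₂) * (y, y)
    have h2 : (1 : Y) = a₂ * y := congrArg Prod.snd hdec
    exact ⟨a₂, h2.symm⟩
  intro y
  obtain ⟨c, hc⟩ := key y
  obtain ⟨d, hd⟩ := key c
  have hy : y = d := by
    calc y = 1 * y := (one_mul y).symm
    _ = (d * c) * y := by rw [hd]
    _ = d * (c * y) := mul_assoc _ _ _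
    _ = d := by rw [hc, mul_one]
  exact ⟨⟨y, c, hy ▸ hd, hc⟩, rfl⟩
end
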